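/- Let h : [0,∞) → ℝ be bounded measurable, and let 0 ≤ a < b < ∞ be such that Jh(x) > 0 for x ∈ (a,b) and Jh(x) = 0 for x ∉ (a,b). Then: (i) for every x ∉ (a,b) and every t ∈ ℝ, T_{th} x = x; (ii) for every x ∈ (a,b), the map ℝ ∋ t ↦ T_{th} x is strictly increasing, takes values in (a,b), and satisfies T_{th} x → b as t → +∞ and T_{th} x → a as t → −∞; in particular t ↦ T_{th} x is a bijection from ℝ onto (a,b). -/

import Mathlib

open MeasureTheory Set Filter

/-- `J h x = ∫_0^x h(s) ds` for `x ≥ 0`, extended by `0` for `x < 0`. -/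
noncomputable def J (h : ℝ → ℝ) (x : ℝ) : ℝ :=
  if 0 ≤ x then ∫ s in (0:ℝ)..x, h s else 0

/-- `z` is a solution to the Cauchy problem `z'(s) = Jh(z(s))`, `z(0) = x`, on all of `ℝ`.
The time-stretching transformations are `T_h^t x = z_{x,h}(t)` and `T_h = T_h^1`;
thus `T_{th} x = Z t 1` where `Z t` solves the problem for `t • h` started at `x`. -/
def IsSol (h : ℝ → ℝ) (x : ℝ) (z : ℝ → ℝ) : Prop :=
  z 0 = x ∧ ∀ s : ℝ, HasDerivAt z (J h (z s)) s

open Topology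

/-! Since `J (t • h) = t * J h`, the solution for `t • h` is the solution for `h` run at speed
`t`, so `t ↦ T_{th} x` is the single orbit of `z' = Jh(z)` through `x`. The points `a` and `b`
are equilibria and `Jh` is Lipschitz, so by uniqueness an orbit starting in `(a,b)` never reaches
them; it therefore stays in `(a,b)`, where `Jh > 0` makes it strictly increasing, and its limits
at `±∞` are equilibria in `[a,b]`, that is `b` and `a`. -/

lemma lipschitzWith_integral_of_norm_le {E : Type*} [NormedAddCommGroup E] [NormedSpace ℝ E]
    [CompleteSpace E] {f : ℝ → E} {C : ℝ} (hf : AEStronglyMeasurable f) (hC : ∀ x, ‖f x‖ ≤ C) :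
    LipschitzWith C.toNNReal (fun x => ∫ s in (0 : ℝ)..x, f s) := by
  have hint : ∀ x y : ℝ, IntervalIntegrable f volume x y := fun x y =>
    (intervalIntegrable_const (c := C)).mono_fun hf.restrict
      (ae_of_all _ fun s => (hC s).trans (le_abs_self C))
  refine LipschitzWith.of_dist_le_mul fun x y => ?_
  rw [dist_eq_norm, intervalIntegral.integral_interval_sub_left (hint 0 x) (hint 0 y),
    Real.coe_toNNReal _ ((norm_nonneg _).trans (hC 0)), Real.dist_eq]
  exact intervalIntegral.norm_integral_le_of_norm_le_const fun s _ => hC s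

lemma nonpos_of_tendsto_of_tendsto_deriv_atTop {g g' : ℝ → ℝ} {L c : ℝ}
    (hg : ∀ s, HasDerivAt g (g' s) s) (hL : Tendsto g atTop (𝓝 L))
    (hc : Tendsto g' atTop (𝓝 c)) : c ≤ 0 := by
  by_contra! hc0
  obtain ⟨t₀, ht₀⟩ := eventually_atTop.1 (hc.eventually_const_lt (half_lt_self hc0))
  have hlin : ∀ s ≥ t₀, c / 2 * (s - t₀) + g t₀ ≤ g s := fun s hs => by
    have := (convex_Ici t₀).mul_sub_le_image_sub_of_le_deriv
      (fun u _ => (hg u).continuousAt.continuousWithinAt)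
      (fun u _ => (hg u).differentiableAt.differentiableWithinAt)
      (fun u hu => by rw [(hg u).deriv]; exact (ht₀ u (interior_subset hu)).le)
      t₀ self_mem_Ici s hs hs
    linarith
  have hgrow : Tendsto (fun s => c / 2 * (s - t₀) + g t₀) atTop atTop :=
    tendsto_atTop_add_const_right _ _
      ((tendsto_atTop_add_const_right _ _ tendsto_id).const_mul_atTop (half_pos hc0))
  exact not_tendsto_nhds_of_tendsto_atTop
    (tendsto_atTop_mono' _ (eventually_atTop.2 ⟨t₀, hlin⟩) hgrow) L hL

lemma eq_zero_of_tendsto_of_tendsto_deriv_atTop {g g' : ℝ → ℝ} {L c : ℝ}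
    (hg : ∀ s, HasDerivAt g (g' s) s) (hL : Tendsto g atTop (𝓝 L))
    (hc : Tendsto g' atTop (𝓝 c)) : c = 0 :=
  le_antisymm (nonpos_of_tendsto_of_tendsto_deriv_atTop hg hL hc)
    (neg_nonpos.1 (nonpos_of_tendsto_of_tendsto_deriv_atTop (fun s => (hg s).neg) hL.neg hc.neg))

lemma eq_zero_of_tendsto_of_tendsto_deriv_atBot {g g' : ℝ → ℝ} {L c : ℝ}
    (hg : ∀ s, HasDerivAt g (g' s) s) (hL : Tendsto g atBot (𝓝 L))
    (hc : Tendsto g' atBot (𝓝 c)) : c = 0 :=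
  neg_eq_zero.1 <| eq_zero_of_tendsto_of_tendsto_deriv_atTop
    (fun s => by simpa using (hg (-s)).comp s (hasDerivAt_neg s))
    (hL.comp tendsto_neg_atTop_atBot) (hc.comp tendsto_neg_atTop_atBot).neg

lemma bijOn_Ioo_of_strictMono_of_tendsto {g : ℝ → ℝ} {a b : ℝ} (hmono : StrictMono g)
    (hcont : Continuous g) (hbot : Tendsto g atBot (𝓝 a)) (htop : Tendsto g atTop (𝓝 b)) :
    BijOn g univ (Ioo a b) := by
  refine ⟨fun t _ => ⟨?_, ?_⟩, hmono.injective.injOn, fun y hy => ?_⟩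
  · exact (hmono.monotone.le_of_tendsto hbot (t - 1)).trans_lt (hmono (sub_one_lt t))
  · exact (hmono (lt_add_one t)).trans_le (hmono.monotone.ge_of_tendsto htop (t + 1))
  obtain ⟨t₁, h₁⟩ := (hbot.eventually_lt_const hy.1).exists
  obtain ⟨t₂, h₂⟩ := (htop.eventually_const_lt hy.2).exists
  obtain ⟨s, hs⟩ := (isPreconnected_range hcont).Icc_subset (mem_range_self t₁)
    (mem_range_self t₂) ⟨h₁.le, h₂.le⟩
  exact ⟨s, trivial, hs⟩

section Autonomous

variable {v g : ℝ → ℝ} {K : NNReal}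

theorem autonomous_solution_unique (hv : LipschitzWith K v) {f : ℝ → ℝ}
    (hf : ∀ s, HasDerivAt f (v (f s)) s) (hg : ∀ s, HasDerivAt g (v (g s)) s) {t₀ : ℝ}
    (h : f t₀ = g t₀) : f = g :=
  ODE_solution_unique_univ (v := fun _ => v) (s := fun _ => univ) (fun _ => hv.lipschitzOnWith)
    (fun t => ⟨hf t, trivial⟩) (fun t => ⟨hg t, trivial⟩) h

theorem autonomous_solution_eq_const (hv : LipschitzWith K v)
    (hg : ∀ s, HasDerivAt g (v (g s)) s) {c t₀ : ℝ} (hc : v c = 0) (h : g t₀ = c) :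
    g = fun _ => c :=
  autonomous_solution_unique hv hg (fun _ => by rw [hc]; exact hasDerivAt_const _ c) h

theorem autonomous_solution_mem_Ioo (hv : LipschitzWith K v)
    (hg : ∀ s, HasDerivAt g (v (g s)) s) {a b : ℝ} (hva : v a = 0) (hvb : v b = 0)
    (h0 : g 0 ∈ Ioo a b) (t : ℝ) : g t ∈ Ioo a b := by
  have hequil : ∀ c, v c = 0 → c ∈ range g → g 0 = c := fun c hc ⟨s, hs⟩ =>
    congrFun (autonomous_solution_eq_const hv hg hc hs) 0
  have hconn := isPreconnected_range (Differentiable.continuous fun s => (hg s).differentiableAt)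
  by_contra hout
  rw [mem_Ioo, not_and_or, not_lt, not_lt] at hout
  rcases hout with hle | hge
  · exact h0.1.ne' <| hequil a hva <|
      hconn.Icc_subset (mem_range_self t) (mem_range_self 0) ⟨hle, h0.1.le⟩
  · exact h0.2.ne <| hequil b hvb <|
      hconn.Icc_subset (mem_range_self 0) (mem_range_self t) ⟨h0.2.le, hge⟩

theorem autonomous_solution_strictMono_tendsto (hv : LipschitzWith K v)
    (hg : ∀ s, HasDerivAt g (v (g s)) s) {a b : ℝ} (hva : v a = 0) (hvb : v b = 0)
    (hpos : ∀ y ∈ Ioo a b, 0 < v y) (h0 : g 0 ∈ Ioo a b) :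
    StrictMono g ∧ Tendsto g atBot (𝓝 a) ∧ Tendsto g atTop (𝓝 b) := by
  have hmem := autonomous_solution_mem_Ioo hv hg hva hvb h0
  have hmono : StrictMono g := strictMono_of_hasDerivAt_pos hg fun t => hpos _ (hmem t)
  have hbddA : BddAbove (range g) := ⟨b, forall_mem_range.2 fun t => (hmem t).2.le⟩
  have hbddB : BddBelow (range g) := ⟨a, forall_mem_range.2 fun t => (hmem t).1.le⟩
  have htop := tendsto_atTop_ciSup hmono.monotone hbddA
  have hbot := tendsto_atBot_ciInf hmono.monotone hbddB
  have hsup : ⨆ t, g t = b := by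
    refine le_antisymm (ciSup_le fun t => (hmem t).2.le) (not_lt.1 fun hlt => ?_)
    have hvL := eq_zero_of_tendsto_of_tendsto_deriv_atTop hg htop
      ((hv.continuous.tendsto _).comp htop)
    exact (hpos _ ⟨(hmem 0).1.trans_le (le_ciSup hbddA 0), hlt⟩).ne' hvL
  have hinf : ⨅ t, g t = a := by
    refine le_antisymm (not_lt.1 fun hlt => ?_) (le_ciInf fun t => (hmem t).1.le)
    have hvM := eq_zero_of_tendsto_of_tendsto_deriv_atBot hg hbot
      ((hv.continuous.tendsto _).comp hbot)
    exact (hpos _ ⟨hlt, (ciInf_le hbddB 0).trans_lt (hmem 0).2⟩).ne' hvM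
  exact ⟨hmono, hinf ▸ hbot, hsup ▸ htop⟩

end Autonomous

lemma J_eq_integral_indicator (h : ℝ → ℝ) :
    J h = fun x => ∫ s in (0 : ℝ)..x, (Ioi 0).indicator h s := by
  ext x
  unfold J
  split_ifs with hx
  · refine intervalIntegral.integral_congr_ae (ae_of_all _ fun s hs => ?_)
    rw [uIoc_of_le hx] at hs
    exact (indicator_of_mem hs.1 h).symm
  · symm
    refine (intervalIntegral.integral_congr_ae (g := fun _ => 0) (ae_of_all _ fun s hs => ?_)).trans
      intervalIntegral.integral_zero
    rw [uIoc_of_ge (not_le.1 hx).le] at hs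
    exact indicator_of_notMem (not_lt.2 hs.2) h

lemma lipschitzWith_J {h : ℝ → ℝ} {C : ℝ} (hmeas : Measurable h)
    (hbdd : ∀ x, 0 ≤ x → |h x| ≤ C) : LipschitzWith C.toNNReal (J h) := by
  rw [J_eq_integral_indicator]
  refine lipschitzWith_integral_of_norm_le
    (hmeas.indicator measurableSet_Ioi).aestronglyMeasurable fun x => ?_
  by_cases hx : x ∈ Ioi 0
  · rw [indicator_of_mem hx, Real.norm_eq_abs]
    exact hbdd x (le_of_lt hx)
  · rw [indicator_of_notMem hx, norm_zero]
    exact (abs_nonneg _).trans (hbdd 0 le_rfl)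

lemma J_smul (h : ℝ → ℝ) (t x : ℝ) : J (t • h) x = t * J h x := by
  unfold J
  split_ifs
  · exact intervalIntegral.integral_const_mul t h
  · rw [mul_zero]

lemma IsSol.unique {h f g : ℝ → ℝ} {x : ℝ} {K : NNReal} (hlip : LipschitzWith K (J h))
    (hf : IsSol h x f) (hg : IsSol h x g) : f = g :=
  autonomous_solution_unique hlip hf.2 hg.2 (hf.1.trans hg.1.symm)

lemma IsSol.smul_comp_mul {h g : ℝ → ℝ} {x : ℝ} (hg : IsSol h x g) (t : ℝ) :
    IsSol (t • h) x (fun s => g (t * s)) :=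
  ⟨by simpa using hg.1, fun s => by
    rw [J_smul]
    simpa [mul_comm, Function.comp_def] using
      (hg.2 (t * s)).comp s ((hasDerivAt_id s).const_mul t)⟩

theorem stmt4_general (h : ℝ → ℝ) (hmeas : Measurable h) (C : ℝ)
    (hbdd : ∀ x : ℝ, 0 ≤ x → |h x| ≤ C) (a b : ℝ)
    (hpos : ∀ x ∈ Set.Ioo a b, 0 < J h x)
    (hzero : ∀ x : ℝ, x ∉ Set.Ioo a b → J h x = 0) :
    (∀ x : ℝ, 0 ≤ x → x ∉ Set.Ioo a b →
        ∀ t : ℝ, ∀ z : ℝ → ℝ, IsSol (t • h) x z → z 1 = x) ∧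
      (∀ x ∈ Set.Ioo a b, ∀ Z : ℝ → ℝ → ℝ, (∀ t : ℝ, IsSol (t • h) x (Z t)) →
        StrictMono (fun t : ℝ => Z t 1) ∧
        (∀ t : ℝ, Z t 1 ∈ Set.Ioo a b) ∧
        Tendsto (fun t : ℝ => Z t 1) atTop (nhds b) ∧
        Tendsto (fun t : ℝ => Z t 1) atBot (nhds a) ∧
        Set.BijOn (fun t : ℝ => Z t 1) Set.univ (Set.Ioo a b)) := by
  have hlip (t : ℝ) : LipschitzWith (|t| * C).toNNReal (J (t • h)) :=
    lipschitzWith_J (hmeas.const_smul t) fun x hx => by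
      rw [Pi.smul_apply, smul_eq_mul, abs_mul]
      exact mul_le_mul_of_nonneg_left (hbdd x hx) (abs_nonneg t)
  refine ⟨fun x _ hx t z hz => ?_, fun x hx Z hZ => ?_⟩
  · have hfix : J (t • h) x = 0 := by rw [J_smul, hzero x hx, mul_zero]
    exact congrFun (autonomous_solution_eq_const (hlip t) hz.2 hfix hz.1) 1
  · have hg : IsSol h x (Z 1) := by simpa only [one_smul] using hZ 1
    have hZ1 (t : ℝ) : Z t 1 = Z 1 t := by
      simpa using congrFun ((hZ t).unique (hlip t) (hg.smul_comp_mul t)) 1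
    simp only [hZ1]
    obtain ⟨hmono, hbot, htop⟩ := autonomous_solution_strictMono_tendsto
      (lipschitzWith_J hmeas hbdd) hg.2 (hzero a (lt_irrefl a ·.1)) (hzero b (lt_irrefl b ·.2))
      hpos (hg.1 ▸ hx)
    have hbij := bijOn_Ioo_of_strictMono_of_tendsto hmono
      (Differentiable.continuous fun s => (hg.2 s).differentiableAt) hbot htop
    exact ⟨hmono, fun t => hbij.mapsTo trivial, htop, hbot, hbij⟩

/-- If `Jh > 0` on `(a,b)` and `Jh = 0` outside `(a,b)` (`0 ≤ a < b`), then: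
(i) points outside `(a,b)` are fixed by every `T_{th}`;
(ii) for `x ∈ (a,b)`, the map `t ↦ T_{th} x` is strictly increasing, takes values in
`(a,b)`, tends to `b` at `+∞` and to `a` at `-∞`, and is a bijection from `ℝ` onto `(a,b)`. -/
theorem stmt4 (h : ℝ → ℝ) (hmeas : Measurable h) (C : ℝ)
    (hbdd : ∀ x : ℝ, 0 ≤ x → |h x| ≤ C) (a b : ℝ) (ha : 0 ≤ a) (hab : a < b)
    (hpos : ∀ x ∈ Set.Ioo a b, 0 < J h x)
    (hzero : ∀ x : ℝ, x ∉ Set.Ioo a b → J h x = 0) :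
    (∀ x : ℝ, 0 ≤ x → x ∉ Set.Ioo a b →
        ∀ t : ℝ, ∀ z : ℝ → ℝ, IsSol (t • h) x z → z 1 = x) ∧
      (∀ x ∈ Set.Ioo a b, ∀ Z : ℝ → ℝ → ℝ, (∀ t : ℝ, IsSol (t • h) x (Z t)) →
        StrictMono (fun t : ℝ => Z t 1) ∧
        (∀ t : ℝ, Z t 1 ∈ Set.Ioo a b) ∧
        Tendsto (fun t : ℝ => Z t 1) atTop (nhds b) ∧
        Tendsto (fun t : ℝ => Z t 1) atBot (nhds a) ∧
        Set.BijOn (fun t : ℝ => Z t 1) Set.univ (Set.Ioo a b)) :=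
  stmt4_general h hmeas C hbdd a b hpos hzero
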